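/- Combining the previous two statements: if ω = dη is a closed 2-form on M that tames an almost complex structure J on an open set U and satisfies ω(v,Jv) ≥ 0 everywhere, Σ ⊂ M is a compact submanifold with η|_{TΣ} exact, and every nonconstant J-holomorphic map from a compact surface has image meeting U, then every J-holomorphic map u : (S, ∂S) → (M, Σ) from a compact surface with boundary is constant. -/

import Mathlib

open MeasureTheory

set_option maxHeartbeats 1000000 in
/-- Exactness obstruction: if `ω = dη` tames `J` on an open set `U` and satisfies
`ω(v,Jv) ≥ 0` everywhere, `Σ = S` is compact with `η|_{TΣ}` exact, and every
nonconstant `J`-holomorphic disc has image meeting `U`, then every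
`J`-holomorphic map `u : (D, ∂D) → (ℝⁿ, Σ)` is constant. -/
theorem stmt14 {n : ℕ}
    (ω : EuclideanSpace ℝ (Fin n) →
      EuclideanSpace ℝ (Fin n) →L[ℝ] EuclideanSpace ℝ (Fin n) →L[ℝ] ℝ)
    (η : EuclideanSpace ℝ (Fin n) → EuclideanSpace ℝ (Fin n) →L[ℝ] ℝ)
    (hη : ContDiff ℝ (⊤ : ℕ∞) η)
    (hdη : ∀ x v w, ω x v w = fderiv ℝ η x v w - fderiv ℝ η x w v)
    (J : EuclideanSpace ℝ (Fin n) →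
      EuclideanSpace ℝ (Fin n) →L[ℝ] EuclideanSpace ℝ (Fin n))
    (hJ : ∀ x v, J x (J x v) = -v)
    (U : Set (EuclideanSpace ℝ (Fin n))) (hU : IsOpen U)
    (htame : ∀ x ∈ U, ∀ v : EuclideanSpace ℝ (Fin n), v ≠ 0 → 0 < ω x v (J x v))
    (hnn : ∀ x v, 0 ≤ ω x v (J x v))
    (S : Set (EuclideanSpace ℝ (Fin n))) (hS : IsCompact S)
    (f : EuclideanSpace ℝ (Fin n) → ℝ)
    (hexact : ∀ γ : ℝ → EuclideanSpace ℝ (Fin n), ContDiff ℝ 1 γ →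
      (∀ t, γ t ∈ S) → ∀ t, HasDerivAt (fun s => f (γ s)) (η (γ t) (deriv γ t)) t)
    (u : ℝ × ℝ → EuclideanSpace ℝ (Fin n)) (hu : ContDiff ℝ (⊤ : ℕ∞) u)
    (hhol : ∀ x, fderiv ℝ u x (0, 1) = J (u x) (fderiv ℝ u x (1, 0)))
    (hbd : ∀ x ∈ Metric.sphere (0 : ℝ × ℝ) 1, u x ∈ S)
    (hmeet : (¬ ∀ x ∈ Metric.closedBall (0 : ℝ × ℝ) 1,
        ∀ y ∈ Metric.closedBall (0 : ℝ × ℝ) 1, u x = u y) →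
      ∃ x ∈ Metric.closedBall (0 : ℝ × ℝ) 1, u x ∈ U) :
    ∀ x ∈ Metric.closedBall (0 : ℝ × ℝ) 1,
      ∀ y ∈ Metric.closedBall (0 : ℝ × ℝ) 1, u x = u y := by
  have hud : Differentiable ℝ u := hu.differentiable (by simp)
  have huc : Continuous u := hud.continuous
  have hu1 : ContDiff ℝ (⊤ : ℕ∞) (fderiv ℝ u) := hu.fderiv_right (m := (⊤ : ℕ∞)) (by simp)
  have hu1d : Differentiable ℝ (fderiv ℝ u) := hu1.differentiable (by simp)
  have hu1c : Continuous (fderiv ℝ u) := hu1.continuous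
  have hηd : Differentiable ℝ η := hη.differentiable (by simp)
  have hηc : Continuous η := hη.continuous
  have hη1c : Continuous (fderiv ℝ η) := (hη.fderiv_right (m := (⊤ : ℕ∞)) (by simp)).continuous
  -- the closed unit ball of ℝ × ℝ is the square [-1,1] × [-1,1]
  have hball : Metric.closedBall (0 : ℝ × ℝ) 1
      = Set.Icc ((-1, -1) : ℝ × ℝ) ((1, 1) : ℝ × ℝ) := by
    rw [show (0 : ℝ × ℝ) = ((0 : ℝ), (0 : ℝ)) from rfl, ← closedBall_prod_same,
      Real.closedBall_eq_Icc, ← Set.Icc_prod_Icc]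
    norm_num
  -- the "area density" d = u*ω and its continuity
  have hcontd : Continuous fun p : ℝ × ℝ =>
      ω (u p) (fderiv ℝ u p (1, 0)) (fderiv ℝ u p (0, 1)) := by
    have h1 : Continuous fun p : ℝ × ℝ => fderiv ℝ u p ((1 : ℝ), (0 : ℝ)) :=
      hu1c.clm_apply continuous_const
    have h2 : Continuous fun p : ℝ × ℝ => fderiv ℝ u p ((0 : ℝ), (1 : ℝ)) :=
      hu1c.clm_apply continuous_const
    have h3 : Continuous fun p : ℝ × ℝ => fderiv ℝ η (u p) := hη1c.comp huc
    have heq : (fun p : ℝ × ℝ => ω (u p) (fderiv ℝ u p (1, 0)) (fderiv ℝ u p (0, 1)))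
        = fun p => fderiv ℝ η (u p) (fderiv ℝ u p (1, 0)) (fderiv ℝ u p (0, 1))
            - fderiv ℝ η (u p) (fderiv ℝ u p (0, 1)) (fderiv ℝ u p (1, 0)) := by
      funext p; exact hdη _ _ _
    rw [heq]
    exact ((h3.clm_apply h1).clm_apply h2).sub ((h3.clm_apply h2).clm_apply h1)
  have hd_nonneg : ∀ p : ℝ × ℝ,
      0 ≤ ω (u p) (fderiv ℝ u p (1, 0)) (fderiv ℝ u p (0, 1)) := by
    intro p; rw [hhol p]; exact hnn _ _
  -- vertical edge integrals
  have edge_v : ∀ c : ℝ, |c| = 1 →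
      (∫ y in (-1 : ℝ)..1, η (u (c, y)) (fderiv ℝ u (c, y) (0, 1)))
        = f (u (c, 1)) - f (u (c, -1)) := by
    intro c hc
    set g : ℝ → ℝ := fun y => η (u (c, y)) (fderiv ℝ u (c, y) (0, 1)) with hg_def
    have hc1 : Continuous fun y : ℝ => ((c, y) : ℝ × ℝ) :=
      continuous_const.prodMk continuous_id
    have hgc : Continuous g :=
      ((hηc.comp (huc.comp hc1)).clm_apply ((hu1c.comp hc1).clm_apply continuous_const))
    have hγline : ∀ t : ℝ, HasDerivAt (fun t : ℝ => ((c, Real.sin t) : ℝ × ℝ))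
        (((0 : ℝ), Real.cos t) : ℝ × ℝ) t :=
      fun t => (hasDerivAt_const t c).prodMk (Real.hasDerivAt_sin t)
    set γ : ℝ → EuclideanSpace ℝ (Fin n) := fun t => u (c, Real.sin t) with hγ_def
    have hγd : ∀ t, HasDerivAt γ (fderiv ℝ u (c, Real.sin t) ((0 : ℝ), Real.cos t)) t :=
      fun t => (hud _).hasFDerivAt.comp_hasDerivAt t (hγline t)
    have hγderiv : ∀ t, deriv γ t = Real.cos t • fderiv ℝ u (c, Real.sin t) (0, 1) := by
      intro t
      rw [(hγd t).deriv, show (((0 : ℝ), Real.cos t) : ℝ × ℝ)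
        = Real.cos t • (((0 : ℝ), (1 : ℝ)) : ℝ × ℝ) by simp, ContinuousLinearMap.map_smul]
    have hγ1 : ContDiff ℝ 1 γ :=
      (hu.of_le (by simp)).comp (contDiff_const.prodMk Real.contDiff_sin)
    have hγS : ∀ t, γ t ∈ S := by
      intro t
      refine hbd _ ?_
      rw [mem_sphere_zero_iff_norm, Prod.norm_def]
      simp only [Real.norm_eq_abs, hc]
      exact max_eq_left (abs_le.2 ⟨Real.neg_one_le_sin t, Real.sin_le_one t⟩)
    have hFTC : (∫ t in (-(Real.pi / 2))..(Real.pi / 2), Real.cos t • g (Real.sin t))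
        = f (γ (Real.pi / 2)) - f (γ (-(Real.pi / 2))) := by
      refine intervalIntegral.integral_eq_sub_of_hasDerivAt (f := fun s => f (γ s)) (f' := fun t => Real.cos t • g (Real.sin t)) (fun t _ => ?_) ?_
      · have h := hexact γ hγ1 hγS t
        rw [hγderiv t, ContinuousLinearMap.map_smul] at h
        exact h
      · exact (Real.continuous_cos.smul (hgc.comp Real.continuous_sin)).intervalIntegrable _ _
    have hCV : (∫ t in (-(Real.pi / 2))..(Real.pi / 2), Real.cos t • g (Real.sin t))
        = ∫ y in (-1 : ℝ)..1, g y := by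
      have h := intervalIntegral.integral_comp_smul_deriv
        (f := Real.sin) (f' := Real.cos) (g := g) (a := -(Real.pi / 2)) (b := Real.pi / 2)
        (fun t _ => Real.hasDerivAt_sin t) Real.continuous_cos.continuousOn hgc
      simpa [Real.sin_pi_div_two, Real.sin_neg, Function.comp] using h
    rw [← hCV, hFTC]
    simp [hγ_def, Real.sin_pi_div_two, Real.sin_neg]
  -- horizontal edge integrals
  have edge_h : ∀ c : ℝ, |c| = 1 →
      (∫ x in (-1 : ℝ)..1, η (u (x, c)) (fderiv ℝ u (x, c) (1, 0)))
        = f (u (1, c)) - f (u (-1, c)) := by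
    intro c hc
    set g : ℝ → ℝ := fun x => η (u (x, c)) (fderiv ℝ u (x, c) (1, 0)) with hg_def
    have hc1 : Continuous fun x : ℝ => ((x, c) : ℝ × ℝ) :=
      continuous_id.prodMk continuous_const
    have hgc : Continuous g :=
      ((hηc.comp (huc.comp hc1)).clm_apply ((hu1c.comp hc1).clm_apply continuous_const))
    have hγline : ∀ t : ℝ, HasDerivAt (fun t : ℝ => ((Real.sin t, c) : ℝ × ℝ))
        ((Real.cos t, (0 : ℝ)) : ℝ × ℝ) t :=
      fun t => (Real.hasDerivAt_sin t).prodMk (hasDerivAt_const t c)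
    set γ : ℝ → EuclideanSpace ℝ (Fin n) := fun t => u (Real.sin t, c) with hγ_def
    have hγd : ∀ t, HasDerivAt γ (fderiv ℝ u (Real.sin t, c) ((Real.cos t, (0 : ℝ)))) t :=
      fun t => (hud _).hasFDerivAt.comp_hasDerivAt t (hγline t)
    have hγderiv : ∀ t, deriv γ t = Real.cos t • fderiv ℝ u (Real.sin t, c) (1, 0) := by
      intro t
      rw [(hγd t).deriv, show ((Real.cos t, (0 : ℝ)) : ℝ × ℝ)
        = Real.cos t • (((1 : ℝ), (0 : ℝ)) : ℝ × ℝ) by simp, ContinuousLinearMap.map_smul]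
    have hγ1 : ContDiff ℝ 1 γ :=
      (hu.of_le (by simp)).comp (Real.contDiff_sin.prodMk contDiff_const)
    have hγS : ∀ t, γ t ∈ S := by
      intro t
      refine hbd _ ?_
      rw [mem_sphere_zero_iff_norm, Prod.norm_def]
      simp only [Real.norm_eq_abs, hc]
      exact max_eq_right (abs_le.2 ⟨Real.neg_one_le_sin t, Real.sin_le_one t⟩)
    have hFTC : (∫ t in (-(Real.pi / 2))..(Real.pi / 2), Real.cos t • g (Real.sin t))
        = f (γ (Real.pi / 2)) - f (γ (-(Real.pi / 2))) := by
      refine intervalIntegral.integral_eq_sub_of_hasDerivAt (f := fun s => f (γ s)) (f' := fun t => Real.cos t • g (Real.sin t)) (fun t _ => ?_) ?_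
      · have h := hexact γ hγ1 hγS t
        rw [hγderiv t, ContinuousLinearMap.map_smul] at h
        exact h
      · exact (Real.continuous_cos.smul (hgc.comp Real.continuous_sin)).intervalIntegrable _ _
    have hCV : (∫ t in (-(Real.pi / 2))..(Real.pi / 2), Real.cos t • g (Real.sin t))
        = ∫ x in (-1 : ℝ)..1, g x := by
      have h := intervalIntegral.integral_comp_smul_deriv
        (f := Real.sin) (f' := Real.cos) (g := g) (a := -(Real.pi / 2)) (b := Real.pi / 2)
        (fun t _ => Real.hasDerivAt_sin t) Real.continuous_cos.continuousOn hgc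
      simpa [Real.sin_pi_div_two, Real.sin_neg, Function.comp] using h
    rw [← hCV, hFTC]
    simp [hγ_def, Real.sin_pi_div_two, Real.sin_neg]
  -- divergence theorem
  have hcη : ∀ p : ℝ × ℝ, HasFDerivAt (fun q => η (u q))
      ((fderiv ℝ η (u p)).comp (fderiv ℝ u p)) p :=
    fun p => (hηd (u p)).hasFDerivAt.comp p (hud p).hasFDerivAt
  have hw : ∀ (v : ℝ × ℝ) (p : ℝ × ℝ), HasFDerivAt (fun q => fderiv ℝ u q v)
      ((ContinuousLinearMap.apply ℝ (EuclideanSpace ℝ (Fin n)) v).comp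
        (fderiv ℝ (fderiv ℝ u) p)) p :=
    fun v p => (ContinuousLinearMap.apply ℝ (EuclideanSpace ℝ (Fin n)) v).hasFDerivAt.comp p
      (hu1d p).hasFDerivAt
  have hdF : ∀ p : ℝ × ℝ, HasFDerivAt (fun q => η (u q) (fderiv ℝ u q (0, 1)))
      ((η (u p)).comp ((ContinuousLinearMap.apply ℝ (EuclideanSpace ℝ (Fin n))
          ((0 : ℝ), (1 : ℝ))).comp (fderiv ℝ (fderiv ℝ u) p))
        + ((fderiv ℝ η (u p)).comp (fderiv ℝ u p)).flip (fderiv ℝ u p (0, 1))) p :=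
    fun p => (hcη p).clm_apply (hw _ p)
  have hdG : ∀ p : ℝ × ℝ, HasFDerivAt (fun q => -η (u q) (fderiv ℝ u q (1, 0)))
      (-((η (u p)).comp ((ContinuousLinearMap.apply ℝ (EuclideanSpace ℝ (Fin n))
          ((1 : ℝ), (0 : ℝ))).comp (fderiv ℝ (fderiv ℝ u) p))
        + ((fderiv ℝ η (u p)).comp (fderiv ℝ u p)).flip (fderiv ℝ u p (1, 0)))) p :=
    fun p => ((hcη p).clm_apply (hw _ p)).neg
  have hdiveq : ∀ p : ℝ × ℝ,
      ((η (u p)).comp ((ContinuousLinearMap.apply ℝ (EuclideanSpace ℝ (Fin n))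
          ((0 : ℝ), (1 : ℝ))).comp (fderiv ℝ (fderiv ℝ u) p))
        + ((fderiv ℝ η (u p)).comp (fderiv ℝ u p)).flip (fderiv ℝ u p (0, 1))) (1, 0)
      + (-((η (u p)).comp ((ContinuousLinearMap.apply ℝ (EuclideanSpace ℝ (Fin n))
          ((1 : ℝ), (0 : ℝ))).comp (fderiv ℝ (fderiv ℝ u) p))
        + ((fderiv ℝ η (u p)).comp (fderiv ℝ u p)).flip (fderiv ℝ u p (1, 0)))) (0, 1)
      = ω (u p) (fderiv ℝ u p (1, 0)) (fderiv ℝ u p (0, 1)) := by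
    intro p
    have hsymm := second_derivative_symmetric (f := u) (f' := fderiv ℝ u)
      (fun y => (hud y).hasFDerivAt) (hu1d p).hasFDerivAt
      (((1 : ℝ), (0 : ℝ)) : ℝ × ℝ) (((0 : ℝ), (1 : ℝ)) : ℝ × ℝ)
    simp only [ContinuousLinearMap.add_apply, ContinuousLinearMap.coe_comp',
      Function.comp_apply, ContinuousLinearMap.flip_apply,
      ContinuousLinearMap.apply_apply, ContinuousLinearMap.neg_apply, hdη]
    rw [hsymm]
    ring
  have hle : ((-1, -1) : ℝ × ℝ) ≤ ((1, 1) : ℝ × ℝ) :=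
    Prod.mk_le_mk.2 ⟨by norm_num, by norm_num⟩
  have hi : IntegrableOn (fun p : ℝ × ℝ =>
      ω (u p) (fderiv ℝ u p (1, 0)) (fderiv ℝ u p (0, 1)))
      (Set.Icc ((-1, -1) : ℝ × ℝ) ((1, 1) : ℝ × ℝ)) :=
    hcontd.continuousOn.integrableOn_compact isCompact_Icc
  have hFc : Continuous fun p : ℝ × ℝ => η (u p) (fderiv ℝ u p (0, 1)) :=
    (hηc.comp huc).clm_apply (hu1c.clm_apply continuous_const)
  have hGc : Continuous fun p : ℝ × ℝ => -η (u p) (fderiv ℝ u p (1, 0)) :=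
    ((hηc.comp huc).clm_apply (hu1c.clm_apply continuous_const)).neg
  have hzero : (∫ p in Set.Icc ((-1, -1) : ℝ × ℝ) ((1, 1) : ℝ × ℝ),
      ω (u p) (fderiv ℝ u p (1, 0)) (fderiv ℝ u p (0, 1))) = 0 := by
    have hdivthm := integral_divergence_prod_Icc_of_hasFDerivAt_off_countable_of_le
      (fun q => η (u q) (fderiv ℝ u q (0, 1)))
      (fun q => -η (u q) (fderiv ℝ u q (1, 0)))
      (fun p => (η (u p)).comp ((ContinuousLinearMap.apply ℝ (EuclideanSpace ℝ (Fin n))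
          ((0 : ℝ), (1 : ℝ))).comp (fderiv ℝ (fderiv ℝ u) p))
        + ((fderiv ℝ η (u p)).comp (fderiv ℝ u p)).flip (fderiv ℝ u p (0, 1)))
      (fun p => -((η (u p)).comp ((ContinuousLinearMap.apply ℝ (EuclideanSpace ℝ (Fin n))
          ((1 : ℝ), (0 : ℝ))).comp (fderiv ℝ (fderiv ℝ u) p))
        + ((fderiv ℝ η (u p)).comp (fderiv ℝ u p)).flip (fderiv ℝ u p (1, 0))))
      ((-1, -1) : ℝ × ℝ) ((1, 1) : ℝ × ℝ) hle ∅ Set.countable_empty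
      hFc.continuousOn hGc.continuousOn (fun x _ => hdF x) (fun x _ => hdG x)
      (by simpa only [hdiveq] using hi)
    simp only [hdiveq] at hdivthm
    rw [hdivthm]
    have e1 := edge_h 1 (by norm_num)
    have e2 := edge_h (-1) (by norm_num)
    have e3 := edge_v 1 (by norm_num)
    have e4 := edge_v (-1) (by norm_num)
    simp only [intervalIntegral.integral_neg]
    norm_num
    rw [e1, e2, e3, e4]
    ring
    -- the integrand vanishes identically on the square
  have haezero : (fun p : ℝ × ℝ =>
        ω (u p) (fderiv ℝ u p (1, 0)) (fderiv ℝ u p (0, 1)))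
      =ᵐ[volume.restrict (Set.Icc ((-1, -1) : ℝ × ℝ) ((1, 1) : ℝ × ℝ))] 0 :=
    (integral_eq_zero_iff_of_nonneg (fun p => hd_nonneg p) hi).1 hzero
  have hIoo : ∀ p ∈ (Set.Ioo (-1 : ℝ) 1) ×ˢ (Set.Ioo (-1 : ℝ) 1),
      ω (u p) (fderiv ℝ u p (1, 0)) (fderiv ℝ u p (0, 1)) = 0 := by
    intro p hp
    by_contra hne
    set d : ℝ × ℝ → ℝ :=
      fun p => ω (u p) (fderiv ℝ u p (1, 0)) (fderiv ℝ u p (0, 1)) with hd_def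
    have hpos : 0 < d p := (hd_nonneg p).lt_of_ne fun h => hne h.symm
    set W := ((Set.Ioo (-1 : ℝ) 1) ×ˢ (Set.Ioo (-1 : ℝ) 1)) ∩ d ⁻¹' Set.Ioi (d p / 2)
      with hW_def
    have hWopen : IsOpen W :=
      (isOpen_Ioo.prod isOpen_Ioo).inter (isOpen_Ioi.preimage hcontd)
    have hWp : p ∈ W := ⟨hp, by simp only [Set.mem_preimage, Set.mem_Ioi]; linarith⟩
    have hWsub : W ⊆ {q : ℝ × ℝ | ¬ d q = 0}
        ∩ Set.Icc ((-1, -1) : ℝ × ℝ) ((1, 1) : ℝ × ℝ) := by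
      rintro q ⟨hq1, hq2⟩
      simp only [Set.mem_preimage, Set.mem_Ioi] at hq2
      refine ⟨fun h0 => by rw [h0] at hq2; linarith, ?_⟩
      rw [← Set.Icc_prod_Icc]
      exact ⟨Set.Ioo_subset_Icc_self hq1.1, Set.Ioo_subset_Icc_self hq1.2⟩
    have hmeas : MeasurableSet {q : ℝ × ℝ | ¬ d q = 0} := by
      have : {q : ℝ × ℝ | ¬ d q = 0} = d ⁻¹' ({0}ᶜ) := rfl
      rw [this]
      exact hcontd.measurable (measurableSet_singleton (0 : ℝ)).compl
    have hnull : volume ({q : ℝ × ℝ | ¬ d q = 0}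
        ∩ Set.Icc ((-1, -1) : ℝ × ℝ) ((1, 1) : ℝ × ℝ)) = 0 := by
      rw [← Measure.restrict_apply hmeas]
      exact ae_iff.1 haezero
    exact absurd (measure_mono_null hWsub hnull)
      (hWopen.measure_pos volume ⟨p, hWp⟩).ne'
  have hIcc0 : ∀ p ∈ Set.Icc ((-1, -1) : ℝ × ℝ) ((1, 1) : ℝ × ℝ),
      ω (u p) (fderiv ℝ u p (1, 0)) (fderiv ℝ u p (0, 1)) = 0 := by
    have hclos : Set.Icc ((-1, -1) : ℝ × ℝ) ((1, 1) : ℝ × ℝ)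
        = closure ((Set.Ioo (-1 : ℝ) 1) ×ˢ (Set.Ioo (-1 : ℝ) 1)) := by
      rw [closure_prod_eq, closure_Ioo (by norm_num : (-1 : ℝ) ≠ 1), Set.Icc_prod_Icc]
    intro p hp
    have heq := Set.EqOn.closure (fun q hq => hIoo q hq) hcontd continuous_const
    exact heq (hclos ▸ hp)
  -- the derivative of u vanishes at points of the square mapped into U
  have hdu0 : ∀ z ∈ Metric.closedBall (0 : ℝ × ℝ) 1, u z ∈ U → fderiv ℝ u z = 0 := by
    intro z hz hzU
    have hdz := hIcc0 z (hball ▸ hz)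
    have h1 : fderiv ℝ u z (1, 0) = 0 := by
      by_contra hne
      have hlt := htame (u z) hzU _ hne
      rw [← hhol z] at hlt
      linarith
    have h2 : fderiv ℝ u z (0, 1) = 0 := by rw [hhol z, h1, map_zero]
    refine ContinuousLinearMap.ext fun v => ?_
    have hv : v = v.1 • (((1 : ℝ), (0 : ℝ)) : ℝ × ℝ) + v.2 • (((0 : ℝ), (1 : ℝ)) : ℝ × ℝ) := by
      ext <;> simp
    rw [hv, map_add, ContinuousLinearMap.map_smul, ContinuousLinearMap.map_smul, h1, h2,
      smul_zero, smul_zero, add_zero, ContinuousLinearMap.zero_apply]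
  -- conclusion: u is constant on the closed ball
  by_contra hncon
  obtain ⟨x₀, hx₀, hUx₀⟩ := hmeet hncon
  apply hncon
  have key : ∀ y ∈ Metric.closedBall (0 : ℝ × ℝ) 1, u y = u x₀ := by
    intro y hy
    set σ : ℝ → ℝ × ℝ := fun s => x₀ + s • (y - x₀) with hσ_def
    have hσmem : ∀ s ∈ Set.Icc (0 : ℝ) 1, σ s ∈ Metric.closedBall (0 : ℝ × ℝ) 1 := by
      intro s hs
      have hconv := (convex_closedBall (0 : ℝ × ℝ) 1) hx₀ hy
        (by linarith [hs.2] : (0 : ℝ) ≤ 1 - s) hs.1 (by ring)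
      have : σ s = (1 - s) • x₀ + s • y := by
        simp only [hσ_def, sub_smul, one_smul, smul_sub]
        abel
      rw [this]
      exact hconv
    have hσcont : Continuous σ :=
      continuous_const.add (continuous_id.smul continuous_const)
    have hσd : ∀ s : ℝ, HasDerivAt σ (y - x₀) s := by
      intro s
      have h := ((hasDerivAt_id s).smul_const (y - x₀)).const_add x₀
      rw [one_smul] at h
      exact h
    set T := {s : ℝ | s ∈ Set.Icc (0 : ℝ) 1 ∧ u (σ s) = u x₀} with hT_def
    have hT0 : (0 : ℝ) ∈ T := ⟨⟨le_refl 0, zero_le_one⟩, by simp [hσ_def]⟩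
    have hTbdd : BddAbove T := ⟨1, fun s hs => hs.1.2⟩
    have hTclosed : IsClosed T := by
      have : T = Set.Icc (0 : ℝ) 1 ∩ (fun s => u (σ s)) ⁻¹' {u x₀} := by
        ext s; simp [hT_def]
      rw [this]
      exact isClosed_Icc.inter (isClosed_singleton.preimage (huc.comp hσcont))
    set m := sSup T with hm_def
    have hmT : m ∈ T := hTclosed.csSup_mem ⟨0, hT0⟩ hTbdd
    have hm1 : m ≤ 1 := hmT.1.2
    have hm0 : 0 ≤ m := hmT.1.1
    by_cases hcase : m = 1
    · have h1 := hmT.2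
      rw [hcase] at h1
      have hσ1 : σ 1 = y := by simp [hσ_def]
      rw [← hσ1]
      exact h1
    · exfalso
      have hmlt : m < 1 := lt_of_le_of_ne hm1 hcase
      have hopen : ∃ δ > 0, ∀ s : ℝ, |s - m| < δ → u (σ s) ∈ U := by
        have hmem : (fun s => u (σ s)) ⁻¹' U ∈ nhds m := by
          apply ((hU.preimage (huc.comp hσcont))).mem_nhds
          show u (σ m) ∈ U
          rw [hmT.2]
          exact hUx₀
        rcases Metric.mem_nhds_iff.1 hmem with ⟨δ, hδ, hball'⟩
        exact ⟨δ, hδ, fun s hs => hball' (by simpa [Real.dist_eq] using hs)⟩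
      obtain ⟨δ, hδpos, hδ⟩ := hopen
      set t := min (m + δ / 2) 1 with ht_def
      have hmt : m < t := lt_min (by linarith) hmlt
      have ht1 : t ≤ 1 := min_le_right _ _
      have hseg : ∀ s ∈ Set.Icc m t, fderiv ℝ u (σ s) = 0 := by
        intro s hs
        have hs0 : 0 ≤ s := le_trans hm0 hs.1
        have hs1 : s ≤ 1 := le_trans hs.2 ht1
        refine hdu0 _ (hσmem s ⟨hs0, hs1⟩) ?_
        apply hδ
        have hsub : s - m ≤ δ / 2 := by
          have := le_trans hs.2 (min_le_left _ _)
          linarith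
        rw [abs_of_nonneg (by linarith [hs.1])]
        linarith
      have hconst := constant_of_has_deriv_right_zero (f := fun s => u (σ s)) (a := m) (b := t)
        ((huc.comp hσcont).continuousOn)
        (fun s hs => by
          have hds : HasDerivAt (fun s => u (σ s)) (fderiv ℝ u (σ s) (y - x₀)) s :=
            (hud (σ s)).hasFDerivAt.comp_hasDerivAt s (hσd s)
          rw [hseg s (Set.Ico_subset_Icc_self hs), ContinuousLinearMap.zero_apply] at hds
          exact hds.hasDerivWithinAt)
      have hut : u (σ t) = u (σ m) := hconst t (Set.right_mem_Icc.2 hmt.le)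
      have htT : t ∈ T := ⟨⟨le_trans hm0 hmt.le, ht1⟩, hut.trans hmT.2⟩
      exact absurd (le_csSup hTbdd htT) (not_le.2 hmt)
  intro x hx y hy
  rw [key x hx, key y hy]
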